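/- arXiv:2602.18655 — 2 statements merged into one kernel-verified Lean document; each statement's English description precedes it below -/
import Mathlib

section
/- (Proposition 1.) Let m be a positive natural number, let F : ℝ^m → ℝ^m be differentiable, let x̄ ∈ ℝ^m, and let K be a continuous linear map on ℝ^m with ⟨K v, v⟩ ≥ λ ‖v‖² for all v, for some λ > 0. Suppose q : ℝ → ℝ^m is differentiable, the Fréchet derivative J(q(t)) of F at q(t) is invertible for all t, and q'(t) = (J(q(t)))⁻¹ (K (x̄ − F(q(t)))). Then for all t ≥ 0, ‖x̄ − F(q(t))‖ ≤ exp(−λ t) · ‖x̄ − F(q(0))‖; in particular F(q(t)) converges to x̄ as t → ∞, so the closed-loop inverse kinematics scheme solves the kinematic inversion problem exponentially fast. -/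
/-! The task error `e t = x̄ - F (q t)` obeys `e' = -J (q') = -K e`, so `d/dt ‖e‖² = -2⟪K e, e⟫
≤ -2λ ‖e‖²`; Grönwall's inequality then gives `‖e t‖² ≤ exp (-2λ t) ‖e 0‖²`. -/

open Filter Topology Real RealInnerProductSpace

theorem le_mul_exp_of_deriv_le_mul {f f' : ℝ → ℝ} {K : ℝ} (hf : ∀ t, HasDerivAt f (f' t) t)
    (bound : ∀ t, f' t ≤ K * f t) {t : ℝ} (ht : 0 ≤ t) : f t ≤ f 0 * exp (K * t) := by
  have hcont : Continuous f := continuous_iff_continuousAt.2 fun t => (hf t).continuousAt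
  have := le_gronwallBound_of_liminf_deriv_right_le (ε := 0) (b := t) hcont.continuousOn
    (fun x _ _ hr => (hf x).hasDerivWithinAt.liminf_right_slope_le hr) le_rfl
    (fun x _ => by simpa using bound x) t ⟨ht, le_rfl⟩
  simpa [gronwallBound_ε0] using this

theorem norm_le_exp_mul_of_inner_deriv_le {E : Type*} [NormedAddCommGroup E]
    [InnerProductSpace ℝ E] {e e' : ℝ → E} {lam : ℝ} (he : ∀ t, HasDerivAt e (e' t) t)
    (dissipative : ∀ t, ⟪e' t, e t⟫ ≤ -lam * ‖e t‖ ^ 2) {t : ℝ} (ht : 0 ≤ t) :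
    ‖e t‖ ≤ exp (-lam * t) * ‖e 0‖ := by
  have hsq : ‖e t‖ ^ 2 ≤ ‖e 0‖ ^ 2 * exp (-2 * lam * t) :=
    le_mul_exp_of_deriv_le_mul (fun s => (he s).norm_sq)
      (fun s => by rw [real_inner_comm]; nlinarith [dissipative s]) ht
  have hexp : exp (-2 * lam * t) = exp (-lam * t) ^ 2 := by
    rw [← exp_nat_mul]; ring_nf
  rw [hexp, ← mul_pow, mul_comm] at hsq
  exact (pow_le_pow_iff_left₀ (norm_nonneg _) (by positivity) two_ne_zero).1 hsq

theorem tendsto_of_norm_sub_le_exp_neg_mul {E : Type*} [NormedAddCommGroup E] {f : ℝ → E}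
    {x : E} {lam C : ℝ} (hlam : 0 < lam)
    (h : ∀ t, 0 ≤ t → ‖x - f t‖ ≤ exp (-lam * t) * C) : Tendsto f atTop (𝓝 x) := by
  have hdecay : Tendsto (fun t => exp (-lam * t) * C) atTop (𝓝 0) := by
    simpa using (tendsto_exp_comp_nhds_zero.2
      (tendsto_id.const_mul_atTop_of_neg (neg_neg_of_pos hlam))).mul_const C
  refine tendsto_iff_norm_sub_tendsto_zero.2 (squeeze_zero' (.of_forall fun _ => norm_nonneg _)
    ?_ hdecay)
  filter_upwards [eventually_ge_atTop 0] with t ht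
  rw [norm_sub_rev]
  exact h t ht

theorem clik_solves_kinematic_inversion_exponentially_general (m : ℕ)
    (F : EuclideanSpace ℝ (Fin m) → EuclideanSpace ℝ (Fin m))
    (xbar : EuclideanSpace ℝ (Fin m))
    (K : EuclideanSpace ℝ (Fin m) →L[ℝ] EuclideanSpace ℝ (Fin m))
    (lam : ℝ) (hlam : 0 < lam)
    (hK : ∀ v : EuclideanSpace ℝ (Fin m), lam * ‖v‖ ^ 2 ≤ ⟪K v, v⟫)
    (q : ℝ → EuclideanSpace ℝ (Fin m))
    (J : ℝ → (EuclideanSpace ℝ (Fin m) ≃L[ℝ] EuclideanSpace ℝ (Fin m)))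
    (hJ : ∀ t : ℝ, HasFDerivAt F
      (J t : EuclideanSpace ℝ (Fin m) →L[ℝ] EuclideanSpace ℝ (Fin m)) (q t))
    (hode : ∀ t : ℝ, HasDerivAt q ((J t).symm (K (xbar - F (q t)))) t) :
    (∀ t : ℝ, 0 ≤ t → ‖xbar - F (q t)‖ ≤ Real.exp (-lam * t) * ‖xbar - F (q 0)‖) ∧
    Filter.Tendsto (fun t => F (q t)) Filter.atTop (nhds xbar) := by
  have herror : ∀ t, HasDerivAt (fun s => xbar - F (q s)) (-K (xbar - F (q t))) t := fun t => by
    have h := (hasDerivAt_const t xbar).sub ((hJ t).comp_hasDerivAt t (hode t))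
    rwa [ContinuousLinearEquiv.coe_coe, ContinuousLinearEquiv.apply_symm_apply, zero_sub] at h
  have hdecay : ∀ t, 0 ≤ t → ‖xbar - F (q t)‖ ≤ exp (-lam * t) * ‖xbar - F (q 0)‖ :=
    fun _ => norm_le_exp_mul_of_inner_deriv_le herror fun s => by
      rw [inner_neg_left, neg_mul, neg_le_neg_iff]
      exact hK _
  exact ⟨hdecay, tendsto_of_norm_sub_le_exp_neg_mul hlam hdecay⟩

/-- Proposition 1: The closed-loop inverse kinematics scheme
`q'(t) = (J(q(t)))⁻¹ (K (x̄ − F(q(t))))` with positive definite gain `K`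
(`⟨K v, v⟩ ≥ λ ‖v‖²`, `λ > 0`) drives the task error to zero exponentially fast:
`‖x̄ − F(q(t))‖ ≤ exp(−λ t) ‖x̄ − F(q(0))‖` for all `t ≥ 0`, and in particular
`F(q(t)) → x̄` as `t → ∞`. -/
theorem clik_solves_kinematic_inversion_exponentially (m : ℕ) (hm : 0 < m)
    (F : EuclideanSpace ℝ (Fin m) → EuclideanSpace ℝ (Fin m))
    (hF : Differentiable ℝ F)
    (xbar : EuclideanSpace ℝ (Fin m))
    (K : EuclideanSpace ℝ (Fin m) →L[ℝ] EuclideanSpace ℝ (Fin m))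
    (lam : ℝ) (hlam : 0 < lam)
    (hK : ∀ v : EuclideanSpace ℝ (Fin m), lam * ‖v‖ ^ 2 ≤ ⟪K v, v⟫)
    (q : ℝ → EuclideanSpace ℝ (Fin m))
    (hq : Differentiable ℝ q)
    (J : ℝ → (EuclideanSpace ℝ (Fin m) ≃L[ℝ] EuclideanSpace ℝ (Fin m)))
    (hJ : ∀ t : ℝ, HasFDerivAt F
      (J t : EuclideanSpace ℝ (Fin m) →L[ℝ] EuclideanSpace ℝ (Fin m)) (q t))
    (hode : ∀ t : ℝ, HasDerivAt q ((J t).symm (K (xbar - F (q t)))) t) :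
    (∀ t : ℝ, 0 ≤ t → ‖xbar - F (q t)‖ ≤ Real.exp (-lam * t) * ‖xbar - F (q 0)‖) ∧
    Filter.Tendsto (fun t => F (q t)) Filter.atTop (nhds xbar) :=
  clik_solves_kinematic_inversion_exponentially_general m F xbar K lam hlam hK q J hJ hode
end

section
/- Let R : ℝ^m × ℝ → ℝ³ be Fréchet differentiable (R(q, s) being the point of the robot centerline at parameter s under actuation q), let x₀ ∈ ℝ³, and let s* : ℝ^m → ℝ be a differentiable map such that for each q, the derivative with respect to s of s ↦ (1/2)‖R(q, s) − x₀‖² vanishes at s = s*(q). Then the closest-point distance task f(q) := (1/2)‖R(q, s*(q)) − x₀‖² is differentiable, and for each index i its i-th partial derivative equals ⟨∂R/∂q_i (q, s*(q)), R(q, s*(q)) − x₀⟩, the Euclidean inner product of the partial derivative of the shape with respect to the i-th actuator, evaluated at the closest point, with the residual vector. -/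
/-!
Envelope theorem: for `f q = g (q, s* q)` the chain rule gives
`Df = ∂_q g + ∂_s g ∘ Ds*`, and the second term vanishes because `s* q` is a stationary point of
`g (q, ·)`. For `g = ½‖R - x₀‖²` the remaining partial derivative is `⟪∂_q R, R - x₀⟫`.
-/

open RealInnerProductSpace

section Envelope

variable {𝕜 E G : Type*} [NontriviallyNormedField 𝕜] [NormedAddCommGroup E] [NormedSpace 𝕜 E]
  [NormedAddCommGroup G] [NormedSpace 𝕜 G]

theorem hasFDerivAt_envelope {g : E × 𝕜 → G} {σ : E → 𝕜} {q : E}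
    (hg : DifferentiableAt 𝕜 g (q, σ q)) (hσ : DifferentiableAt 𝕜 σ q)
    (hstat : deriv (fun s => g (q, s)) (σ q) = 0) :
    HasFDerivAt (fun p => g (p, σ p)) (fderiv 𝕜 (fun p => g (p, σ q)) q) q := by
  set L := fderiv 𝕜 g (q, σ q)
  have h_partial_q : HasFDerivAt (fun p => g (p, σ q))
      (L.comp ((ContinuousLinearMap.id 𝕜 E).prod 0)) q :=
    hg.hasFDerivAt.comp q ((hasFDerivAt_id q).prodMk (hasFDerivAt_const _ q))
  have h_partial_s : L (0, 1) = 0 := by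
    rw [← hstat]
    exact (hg.hasFDerivAt.comp_hasDerivAt (σ q)
      ((hasDerivAt_const _ q).prodMk (hasDerivAt_id _))).deriv.symm
  have h_total : HasFDerivAt (fun p => g (p, σ p))
      (L.comp ((ContinuousLinearMap.id 𝕜 E).prod (fderiv 𝕜 σ q))) q :=
    hg.hasFDerivAt.comp q ((hasFDerivAt_id q).prodMk hσ.hasFDerivAt)
  rw [h_partial_q.fderiv]
  convert h_total using 1
  ext v
  have h_split : (v, fderiv 𝕜 σ q v) = (v, 0) + fderiv 𝕜 σ q v • ((0 : E), (1 : 𝕜)) := by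
    simp
  simp only [ContinuousLinearMap.comp_apply, ContinuousLinearMap.prod_apply,
    ContinuousLinearMap.id_apply, zero_apply]
  rw [h_split, map_add, map_smul, h_partial_s, smul_zero, add_zero]

end Envelope

theorem fderiv_half_norm_sq_sub_apply {G F : Type*} [NormedAddCommGroup G] [NormedSpace ℝ G]
    [NormedAddCommGroup F] [InnerProductSpace ℝ F] {f : G → F} {x : G}
    (hf : DifferentiableAt ℝ f x) (c : F) (v : G) :
    fderiv ℝ (fun y => (1 / 2 : ℝ) * ‖f y - c‖ ^ 2) x v = ⟪fderiv ℝ f x v, f x - c⟫ := by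
  rw [((hf.hasFDerivAt.sub_const c).norm_sq.const_mul (1 / 2 : ℝ)).fderiv]
  simp [← inner_sub_left, real_inner_comm]

/-- For a differentiable centerline map `R : ℝ^m × ℝ → ℝ³`, a
target `x₀ ∈ ℝ³`, and a differentiable map `s* : ℝ^m → ℝ` at which the
`s`-derivative of `s ↦ (1/2)‖R(q,s) − x₀‖²` vanishes, the closest-point
distance task `f(q) = (1/2)‖R(q, s*(q)) − x₀‖²` is differentiable, and its
`i`-th partial derivative equals `⟨∂R/∂qᵢ (q, s*(q)), R(q, s*(q)) − x₀⟩`. -/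
theorem closest_point_distance_task_jacobian (m : ℕ)
    (R : EuclideanSpace ℝ (Fin m) × ℝ → EuclideanSpace ℝ (Fin 3))
    (hR : Differentiable ℝ R)
    (x₀ : EuclideanSpace ℝ (Fin 3))
    (sstar : EuclideanSpace ℝ (Fin m) → ℝ)
    (hsstar : Differentiable ℝ sstar)
    (hstat : ∀ q : EuclideanSpace ℝ (Fin m),
      deriv (fun s : ℝ => (1 / 2 : ℝ) * ‖R (q, s) - x₀‖ ^ 2) (sstar q) = 0) :
    Differentiable ℝ (fun q => (1 / 2 : ℝ) * ‖R (q, sstar q) - x₀‖ ^ 2) ∧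
    ∀ (q : EuclideanSpace ℝ (Fin m)) (i : Fin m),
      fderiv ℝ (fun p => (1 / 2 : ℝ) * ‖R (p, sstar p) - x₀‖ ^ 2) q
          (EuclideanSpace.single i 1) =
        ⟪fderiv ℝ (fun p => R (p, sstar q)) q (EuclideanSpace.single i 1),
          R (q, sstar q) - x₀⟫ := by
  have h_dist : Differentiable ℝ fun x => (1 / 2 : ℝ) * ‖R x - x₀‖ ^ 2 :=
    ((hR.sub_const x₀).norm_sq ℝ).const_mul _
  have h_envelope (q : EuclideanSpace ℝ (Fin m)) :=
    hasFDerivAt_envelope (h_dist _) (hsstar q) (hstat q)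
  refine ⟨fun q => (h_envelope q).differentiableAt, fun q i => ?_⟩
  rw [(h_envelope q).fderiv]
  exact fderiv_half_norm_sq_sub_apply
    ((hR _).comp q ((differentiableAt_id).prodMk (differentiableAt_const _))) x₀ _
end
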